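/- arXiv:2402.04376 — 3 statements merged into one kernel-verified Lean document; each statement's English description precedes it below -/
import Mathlib

section
/- Let D = ‖θ* − θ*s‖² ≥ 0, and define R(α) = α² D + (α²/m + (1−α)²/n)·d for α ∈ [0,1] with m, n ≥ 1 and d > 0. Then the minimizer α* = (d/n) / (D + d/m + d/n) lies in [0,1], and the minimal value is R(α*) = ((D + d/m)/(D + d/m + d/n)) · (d/n). In particular R(α*) < d/n strictly. -/
/-! Writing `S = D + d/m + d/n`, the risk is a quadratic in `α` with leading coefficient `S > 0`,
and completing the square gives `R α = S (α - α*)² + (D + d/m) / S · d/n`. Hence `α*` minimises `R`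
over all of `ℝ`, and the minimum falls short of `d/n` because `D + d/m < S` when `d/n > 0`. -/

lemma risk_eq_completed_square {D d m n : ℝ} (hS : D + d / m + d / n ≠ 0) (α : ℝ) :
    α ^ 2 * D + (α ^ 2 / m + (1 - α) ^ 2 / n) * d =
      (D + d / m + d / n) * (α - (d / n) / (D + d / m + d / n)) ^ 2 +
        ((D + d / m) / (D + d / m + d / n)) * (d / n) := by
  field_simp
  ring

/-- Optimal weight for the Gaussian mean estimation risk
`R(α) = α² D + (α²/m + (1−α)²/n) d`. -/
theorem stmt_2 (D d m n : ℝ) (hD : 0 ≤ D) (hd : 0 < d) (hm : 1 ≤ m) (hn : 1 ≤ n)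
    (R : ℝ → ℝ) (hR : ∀ α, R α = α ^ 2 * D + (α ^ 2 / m + (1 - α) ^ 2 / n) * d)
    (αstar : ℝ) (hαstar : αstar = (d / n) / (D + d / m + d / n)) :
    (0 ≤ αstar ∧ αstar ≤ 1) ∧
    (∀ α ∈ Set.Icc (0 : ℝ) 1, R αstar ≤ R α) ∧
    R αstar = ((D + d / m) / (D + d / m + d / n)) * (d / n) ∧
    R αstar < d / n := by
  have hm₀ : 0 < m := one_pos.trans_le hm
  have hn₀ : 0 < n := one_pos.trans_le hn
  have hdm : 0 < d / m := by positivity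
  have ht : 0 < d / n := by positivity
  have hS : 0 < D + d / m + d / n := by positivity
  have hR' : ∀ α, R α = (D + d / m + d / n) * (α - αstar) ^ 2 +
      ((D + d / m) / (D + d / m + d / n)) * (d / n) := by
    intro α
    rw [hR, risk_eq_completed_square hS.ne', hαstar]
  have hmin : R αstar = ((D + d / m) / (D + d / m + d / n)) * (d / n) := by
    simp [hR']
  refine ⟨⟨by rw [hαstar]; positivity, by rw [hαstar, div_le_one hS]; linarith⟩,
    fun α _ => ?_, hmin, ?_⟩
  · rw [hmin, hR']
    exact le_add_of_nonneg_left (by positivity)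
  · rw [hmin]
    exact mul_lt_of_lt_one_left ht ((div_lt_one hS).2 (by linarith))
end

section
/- Let r, p > 0, λ ∈ (0,1), and let (θ(q))_{q} be coefficients satisfying Σ_q c_p(q)|θ(q)|² ≤ 1 where c_s(q) = 1 + ‖q‖^{2s}. Then Σ_q (λ c_r(q)/(1 + λ c_r(q)))² |θ(q)|² ≤ C·λ^{min(2, p/r)} for a constant C depending only on r, p, d. -/
/-! With `t = λ c_r(q)` the shrinkage factor `s = t / (1 + t)` satisfies `s ≤ min 1 t`, so
`s² ≤ s^α ≤ t^α` for `α = min 2 (p/r)`. Since `c_r ≥ 1` and `α ≤ p/r`,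
`c_r^α ≤ c_r^{p/r} ≤ 2^{p/r} c_p`, hence every frequency obeys `s² ≤ 2^{p/r} λ^α c_p(q)`,
and summing against `θ(q)²` uses the Sobolev-ball constraint once. -/

open Real

lemma one_add_rpow_le_two_rpow_mul {y β : ℝ} (hy : 0 ≤ y) (hβ : 0 ≤ β) :
    (1 + y) ^ β ≤ 2 ^ β * (1 + y ^ β) :=
  calc (1 + y) ^ β ≤ (2 * max 1 y) ^ β := by
        gcongr
        linarith [le_max_left 1 y, le_max_right 1 y]
    _ = 2 ^ β * max 1 (y ^ β) := by
        rw [mul_rpow zero_le_two (hy.trans (le_max_right _ _)), rpow_max zero_le_one hy hβ,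
          one_rpow]
    _ ≤ 2 ^ β * (1 + y ^ β) := by
        gcongr
        exact max_le (by linarith [rpow_nonneg hy β]) (by linarith)

lemma div_one_add_sq_le_rpow {t α : ℝ} (ht : 0 < t) (hα : 0 ≤ α) (hα2 : α ≤ 2) :
    (t / (1 + t)) ^ 2 ≤ t ^ α := by
  have hs : 0 < t / (1 + t) := by positivity
  have hs1 : t / (1 + t) ≤ 1 := (div_le_one (by positivity)).2 (by linarith)
  calc (t / (1 + t)) ^ 2 = (t / (1 + t)) ^ (2 : ℝ) := (rpow_two _).symm
    _ ≤ (t / (1 + t)) ^ α := rpow_le_rpow_of_exponent_ge hs hs1 hα2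
    _ ≤ t ^ α := by gcongr; exact div_le_self ht.le (by linarith)

lemma shrinkage_sq_le {r p x lam : ℝ} (hr : 0 < r) (hp : 0 < p) (hx : 0 ≤ x) (hlam : 0 < lam) :
    (lam * (1 + x ^ (2 * r)) / (1 + lam * (1 + x ^ (2 * r)))) ^ 2
      ≤ 2 ^ (p / r) * lam ^ min 2 (p / r) * (1 + x ^ (2 * p)) := by
  have hα : 0 ≤ min 2 (p / r) := le_min zero_le_two (div_pos hp hr).le
  have hpow : (x ^ (2 * r)) ^ (p / r) = x ^ (2 * p) := by
    rw [← rpow_mul hx]; congr 1; field_simp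
  calc (lam * (1 + x ^ (2 * r)) / (1 + lam * (1 + x ^ (2 * r)))) ^ 2
      ≤ (lam * (1 + x ^ (2 * r))) ^ min 2 (p / r) :=
        div_one_add_sq_le_rpow (by positivity) hα (min_le_left _ _)
    _ = lam ^ min 2 (p / r) * (1 + x ^ (2 * r)) ^ min 2 (p / r) :=
        mul_rpow hlam.le (by positivity)
    _ ≤ lam ^ min 2 (p / r) * (1 + x ^ (2 * r)) ^ (p / r) := by
        gcongr
        · exact le_add_of_nonneg_right (rpow_nonneg hx _)
        · exact min_le_right _ _
    _ ≤ lam ^ min 2 (p / r) * (2 ^ (p / r) * (1 + x ^ (2 * p))) := by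
        gcongr
        rw [← hpow]
        exact one_add_rpow_le_two_rpow_mul (rpow_nonneg hx _) (div_pos hp hr).le
    _ = 2 ^ (p / r) * lam ^ min 2 (p / r) * (1 + x ^ (2 * p)) := by ring

lemma tsum_le_of_le_mul_of_tsum_le_one {Q : Type*} {f g : Q → ℝ} {K : ℝ} (hK : 0 ≤ K)
    (hf : ∀ q, 0 ≤ f q) (hfg : ∀ q, f q ≤ K * g q) (hg : Summable g) (hg1 : ∑' q, g q ≤ 1) :
    ∑' q, f q ≤ K :=
  calc ∑' q, f q ≤ ∑' q, K * g q :=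
        (Summable.of_nonneg_of_le hf hfg (hg.mul_left K)).tsum_le_tsum hfg (hg.mul_left K)
    _ = K * ∑' q, g q := tsum_mul_left
    _ ≤ K := mul_le_of_le_one_right hK hg1

/-- Regularization-bias bound over a Sobolev ball: if `Σ_q c_p(q)|θ(q)|² ≤ 1` with
`c_s(q) = 1 + N(q)^{2s}`, then `Σ_q (λc_r(q)/(1+λc_r(q)))² |θ(q)|² ≤ C λ^{min(2, p/r)}`. -/
theorem stmt_8 (r p : ℝ) (hr : 0 < r) (hp : 0 < p) :
    ∃ C : ℝ, 0 < C ∧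
      ∀ (Q : Type*) (N : Q → ℝ) (θ : Q → ℝ) (lam : ℝ),
        0 < lam → lam < 1 → (∀ q, 0 ≤ N q) →
        Summable (fun q => (1 + N q ^ (2 * p)) * (θ q) ^ 2) →
        (∑' q, (1 + N q ^ (2 * p)) * (θ q) ^ 2) ≤ 1 →
        ∑' q, (lam * (1 + N q ^ (2 * r)) / (1 + lam * (1 + N q ^ (2 * r)))) ^ 2 * (θ q) ^ 2
          ≤ C * lam ^ (min 2 (p / r)) := by
  refine ⟨2 ^ (p / r), by positivity, fun Q N θ lam hlam _ hN hsum hsum1 => ?_⟩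
  refine tsum_le_of_le_mul_of_tsum_le_one (by positivity) (fun q => by positivity)
    (fun q => ?_) hsum hsum1
  rw [← mul_assoc]
  exact mul_le_mul_of_nonneg_right (shrinkage_sq_le hr hp (hN q) hlam) (sq_nonneg _)
end

section
/- Let δ, δ_s > 0 with δ + δ_s > 1, ω > 0, and σ, σ_s, τ, τ_s ≥ 0. Define F(ρ, ρ_s) = −ω√(ρ²+ρ_s²) + ρ√(δ(τ²+σ²)) + ρ_s√(δ_s(τ_s²+σ_s²)) − δρ²/(2(1−α)) − δ_sρ_s²/(2α) for ρ, ρ_s ≥ 0 and α ∈ (0,1). If additionally τ²+σ² ≥ ω² and τ_s²+σ_s² ≥ ω², then (0,0) is not a global maximizer of F: there is a direction v = (v₁, v₂) with v₁, v₂ ≥ 0, v₁²+v₂²=1, along which the directional derivative of F at the origin is at least ω(√(δ+δ_s) − 1) > 0. -/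
open Filter
open scoped Topology

/-- The dual origin is not optimal in the Gordon min-max when `δ + δs > 1`:
there is a nonnegative unit direction along which the one-sided directional
derivative of `F` at `(0,0)` is at least `ω(√(δ+δs) − 1) > 0`, and consequently
`(0,0)` is not a global maximizer of `F` over the nonnegative quadrant. -/
theorem stmt_16 (δ δs ω σ σs τ τs α : ℝ)
    (hδ : 0 < δ) (hδs : 0 < δs) (hsum : 1 < δ + δs) (hω : 0 < ω)
    (hσ : 0 ≤ σ) (hσs : 0 ≤ σs) (hτ : 0 ≤ τ) (hτs : 0 ≤ τs)
    (hα0 : 0 < α) (hα1 : α < 1)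
    (h1 : ω ^ 2 ≤ τ ^ 2 + σ ^ 2) (h2 : ω ^ 2 ≤ τs ^ 2 + σs ^ 2)
    (F : ℝ → ℝ → ℝ)
    (hF : ∀ ρ ρs, F ρ ρs
      = -ω * Real.sqrt (ρ ^ 2 + ρs ^ 2)
        + ρ * Real.sqrt (δ * (τ ^ 2 + σ ^ 2))
        + ρs * Real.sqrt (δs * (τs ^ 2 + σs ^ 2))
        - δ * ρ ^ 2 / (2 * (1 - α)) - δs * ρs ^ 2 / (2 * α)) :
    (∃ v₁ v₂ D : ℝ, 0 ≤ v₁ ∧ 0 ≤ v₂ ∧ v₁ ^ 2 + v₂ ^ 2 = 1 ∧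
      Tendsto (fun t : ℝ => (F (t * v₁) (t * v₂) - F 0 0) / t) (𝓝[>] 0) (𝓝 D) ∧
      ω * (Real.sqrt (δ + δs) - 1) ≤ D ∧ 0 < D) ∧
    ∃ ρ ρs : ℝ, 0 ≤ ρ ∧ 0 ≤ ρs ∧ F 0 0 < F ρ ρs := by
  have hs : 0 < δ + δs := by linarith
  have hss : 0 < Real.sqrt (δ + δs) := Real.sqrt_pos.2 hs
  set v₁ : ℝ := Real.sqrt δ / Real.sqrt (δ + δs) with hv₁def
  set v₂ : ℝ := Real.sqrt δs / Real.sqrt (δ + δs) with hv₂def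
  have hv₁ : 0 ≤ v₁ := div_nonneg (Real.sqrt_nonneg _) hss.le
  have hv₂ : 0 ≤ v₂ := div_nonneg (Real.sqrt_nonneg _) hss.le
  have hunit : v₁ ^ 2 + v₂ ^ 2 = 1 := by
    rw [hv₁def, hv₂def, div_pow, div_pow, Real.sq_sqrt hδ.le, Real.sq_sqrt hδs.le,
      Real.sq_sqrt hs.le, ← add_div, div_self hs.ne']
  set A : ℝ := Real.sqrt (δ * (τ ^ 2 + σ ^ 2)) with hA
  set B : ℝ := Real.sqrt (δs * (τs ^ 2 + σs ^ 2)) with hB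
  set D : ℝ := -ω + v₁ * A + v₂ * B with hD
  set C : ℝ := δ * v₁ ^ 2 / (2 * (1 - α)) + δs * v₂ ^ 2 / (2 * α) with hC
  have hF00 : F 0 0 = 0 := by
    rw [hF]; simp
  have hα1' : (1 : ℝ) - α ≠ 0 := by linarith
  -- the eventual identity of the difference quotient
  have heq : ∀ t ∈ Set.Ioi (0:ℝ),
      (F (t * v₁) (t * v₂) - F 0 0) / t = D - t * C := by
    intro t ht
    have ht0 : 0 < t := ht
    have hsq : Real.sqrt ((t * v₁) ^ 2 + (t * v₂) ^ 2) = t := by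
      have : (t * v₁) ^ 2 + (t * v₂) ^ 2 = t ^ 2 := by
        have := hunit; nlinarith [this]
      rw [this, Real.sqrt_sq ht0.le]
    rw [hF00, hF, hsq, hD, hC]
    field_simp
    ring
  have htend : Tendsto (fun t : ℝ => (F (t * v₁) (t * v₂) - F 0 0) / t) (𝓝[>] 0) (𝓝 D) := by
    have hlin : Tendsto (fun t : ℝ => D - t * C) (𝓝[>] (0:ℝ)) (𝓝 D) := by
      have : Tendsto (fun t : ℝ => D - t * C) (𝓝 (0:ℝ)) (𝓝 (D - 0 * C)) := by
        exact (tendsto_const_nhds.sub ((continuous_id.mul continuous_const).tendsto 0))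
      simpa using this.mono_left nhdsWithin_le_nhds
    exact hlin.congr' (eventually_nhdsWithin_of_forall fun t ht => (heq t ht).symm)
  have hAω : ω * Real.sqrt δ ≤ A := by
    have : Real.sqrt (δ * ω ^ 2) ≤ A :=
      Real.sqrt_le_sqrt (mul_le_mul_of_nonneg_left h1 hδ.le)
    calc ω * Real.sqrt δ = Real.sqrt (δ * ω ^ 2) := by
          rw [Real.sqrt_mul hδ.le, Real.sqrt_sq hω.le]; ring
      _ ≤ A := this
  have hBω : ω * Real.sqrt δs ≤ B := by
    have : Real.sqrt (δs * ω ^ 2) ≤ B :=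
      Real.sqrt_le_sqrt (mul_le_mul_of_nonneg_left h2 hδs.le)
    calc ω * Real.sqrt δs = Real.sqrt (δs * ω ^ 2) := by
          rw [Real.sqrt_mul hδs.le, Real.sqrt_sq hω.le]; ring
      _ ≤ B := this
  have hsumv : v₁ * Real.sqrt δ + v₂ * Real.sqrt δs = Real.sqrt (δ + δs) := by
    have e1 : v₁ * Real.sqrt δ = δ / Real.sqrt (δ + δs) := by
      rw [hv₁def, div_mul_eq_mul_div, Real.mul_self_sqrt hδ.le]
    have e2 : v₂ * Real.sqrt δs = δs / Real.sqrt (δ + δs) := by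
      rw [hv₂def, div_mul_eq_mul_div, Real.mul_self_sqrt hδs.le]
    rw [e1, e2, ← add_div, Real.div_sqrt]
  have hDlb : ω * (Real.sqrt (δ + δs) - 1) ≤ D := by
    have hv1A : v₁ * (ω * Real.sqrt δ) ≤ v₁ * A := by
      exact mul_le_mul_of_nonneg_left hAω hv₁
    have hv2B : v₂ * (ω * Real.sqrt δs) ≤ v₂ * B := by
      exact mul_le_mul_of_nonneg_left hBω hv₂
    have hkey : ω * Real.sqrt (δ + δs) = v₁ * (ω * Real.sqrt δ) + v₂ * (ω * Real.sqrt δs) := by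
      rw [← hsumv]; ring
    have hexp : ω * (Real.sqrt (δ + δs) - 1) = ω * Real.sqrt (δ + δs) - ω := by ring
    rw [hD, hexp, hkey]
    linarith [hv1A, hv2B]
  have hDpos : 0 < D := by
    have h1s : 1 < Real.sqrt (δ + δs) := by
      have : Real.sqrt 1 < Real.sqrt (δ + δs) :=
        Real.sqrt_lt_sqrt (by norm_num) hsum
      simpa using this
    have := mul_pos hω (by linarith : (0:ℝ) < Real.sqrt (δ + δs) - 1)
    linarith [hDlb]
  refine ⟨⟨v₁, v₂, D, hv₁, hv₂, hunit, htend, hDlb, hDpos⟩, ?_⟩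
  have hev : ∀ᶠ t in 𝓝[>] (0:ℝ),
      0 < (F (t * v₁) (t * v₂) - F 0 0) / t := htend.eventually (eventually_gt_nhds hDpos)
  obtain ⟨t, ht, htm⟩ := (hev.and (eventually_mem_nhdsWithin)).exists
  have ht0 : 0 < t := htm
  refine ⟨t * v₁, t * v₂, mul_nonneg ht0.le hv₁, mul_nonneg ht0.le hv₂, ?_⟩
  have : 0 < F (t * v₁) (t * v₂) - F 0 0 := by
    have := mul_pos ht ht0
    rwa [div_mul_cancel₀ _ ht0.ne'] at this
  linarith
end
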